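/- Under Assumptions 1 and 2, let η ∈ (0,1) and let M ∈ {1,…,r} be such that W := ⨁_{k=0}^{M−1} A₁₁^k·E₁·𝒟* is a C-set in ℝ^r. If N ∈ ℕ with N ≥ 1 satisfies A₁₁^{M·N}·W ⊆ η • W, then, setting k = M·N, it holds that R_∞^1 ⊆ (1−η)⁻¹ • R_k^1. -/

import Mathlib

/-!
Since `A` is block upper triangular and `E` vanishes below row `r`, every `R_k^1` lies in
`ℝ^r × {0}`, where it is the reachable set `S_k = ⨁_{i<k} A₁₁ⁱ E₁ 𝒟*` of the pair
`(A₁₁, E₁)`; in particular `W = S_M`. Splitting `S_{MN}` into the `N` blocks `A₁₁^{Mt} W` shows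
`A₁₁^{MN} S_{MN} ⊆ η • S_{MN}`, and splitting `S_{MNk}` into the `k` blocks
`(A₁₁^{MN})ˢ S_{MN} ⊆ ηˢ • S_{MN}` gives, by convexity,
`S_k ⊆ S_{MNk} ⊆ (1 + η + ⋯ + η^{k-1}) • S_{MN} ⊆ (1 - η)⁻¹ • S_{MN}`.
-/

open Matrix Set Pointwise

namespace RPIScaling

/-- A C-set in `ℝ^p`: convex, compact, containing the origin in its interior. -/
def IsCSet {p : ℕ} (S : Set (Fin p → ℝ)) : Prop :=
  Convex ℝ S ∧ IsCompact S ∧ (0 : Fin p → ℝ) ∈ interior S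

/-- Pontryagin difference `U ⊖ V`. -/
def pontryaginDiff {p : ℕ} (U V : Set (Fin p → ℝ)) : Set (Fin p → ℝ) :=
  {x | ∀ v ∈ V, x + v ∈ U}

/-- Upper-left `r × r` block of `A`. -/
def blockA11 {n r : ℕ} (hrn : r ≤ n) (A : Matrix (Fin n) (Fin n) ℝ) :
    Matrix (Fin r) (Fin r) ℝ :=
  A.submatrix (Fin.castLE hrn) (Fin.castLE hrn)

/-- Upper `r × m` block of `E`. -/
def blockE1 {n m r : ℕ} (hrn : r ≤ n) (E : Matrix (Fin n) (Fin m) ℝ) :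
    Matrix (Fin r) (Fin m) ℝ :=
  E.submatrix (Fin.castLE hrn) id

/-- Lower-right `(n-r) × (n-r)` block of `A`. -/
def blockA22 {n : ℕ} (r : ℕ) (A : Matrix (Fin n) (Fin n) ℝ) :
    Matrix (Fin (n - r)) (Fin (n - r)) ℝ :=
  A.submatrix (fun i => ⟨r + i.1, by have h := i.2; omega⟩)
    (fun i => ⟨r + i.1, by have h := i.2; omega⟩)

/-- The controllability matrix `[E₁, A₁₁E₁, …, A₁₁^{r-1}E₁]` of the pair `(A₁₁, E₁)`. -/
def controllabilityMatrix {n m r : ℕ} (hrn : r ≤ n) (A : Matrix (Fin n) (Fin n) ℝ)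
    (E : Matrix (Fin n) (Fin m) ℝ) : Matrix (Fin r) (Fin r × Fin m) ℝ :=
  Matrix.of fun i p => ((blockA11 hrn A) ^ (p.1 : ℕ) * blockE1 hrn E) i p.2

/-- Assumption 1: block structure of `A` and `E`, controllability of `(A₁₁, E₁)`,
and `𝒳`, `𝒟*` are C-sets. -/
structure Assumption1 {n m r : ℕ} (hrn : r ≤ n) (A : Matrix (Fin n) (Fin n) ℝ)
    (E : Matrix (Fin n) (Fin m) ℝ) (X : Set (Fin n → ℝ)) (D : Set (Fin m → ℝ)) : Prop where
  hn : 0 < n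
  hm : 0 < m
  hr : 0 < r
  lowerLeftA : ∀ i j : Fin n, r ≤ (i : ℕ) → (j : ℕ) < r → A i j = 0
  lowerE : ∀ i : Fin n, r ≤ (i : ℕ) → ∀ j, E i j = 0
  controllable : (controllabilityMatrix hrn A E).rank = r
  hX : IsCSet X
  hD : IsCSet D

/-- All complex eigenvalues of `M` have modulus `< 1`. -/
def StrictlyStable {p : ℕ} (M : Matrix (Fin p) (Fin p) ℝ) : Prop :=
  ∀ μ ∈ spectrum ℂ (M.map (algebraMap ℝ ℂ)), ‖μ‖ < 1

/-- All complex eigenvalues of `M` have modulus `≤ 1`. -/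
def Stable {p : ℕ} (M : Matrix (Fin p) (Fin p) ℝ) : Prop :=
  ∀ μ ∈ spectrum ℂ (M.map (algebraMap ℝ ℂ)), ‖μ‖ ≤ 1

/-- Assumption 2: the eigenvalues of `A₁₁` and `A₂₂` are strictly stable. -/
def Assumption2 {n r : ℕ} (hrn : r ≤ n) (A : Matrix (Fin n) (Fin n) ℝ) : Prop :=
  StrictlyStable (blockA11 hrn A) ∧ StrictlyStable (blockA22 r A)

/-- Assumption 2': the eigenvalues of `A₂₂` are stable. -/
def Assumption2' {n : ℕ} (r : ℕ) (A : Matrix (Fin n) (Fin n) ℝ) : Prop :=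
  Stable (blockA22 r A)

/-- `P` is robust positively invariant for disturbance scaling `α`. -/
def IsRPI {n m : ℕ} (A : Matrix (Fin n) (Fin n) ℝ) (E : Matrix (Fin n) (Fin m) ℝ)
    (X : Set (Fin n → ℝ)) (D : Set (Fin m → ℝ)) (α : ℝ) (P : Set (Fin n → ℝ)) : Prop :=
  P ⊆ X ∧ ∀ x ∈ P, ∀ d ∈ α • D, A.mulVec x + E.mulVec d ∈ P

/-- The maximal RPI set: the union of all RPI sets. -/
def Pmax {n m : ℕ} (A : Matrix (Fin n) (Fin n) ℝ) (E : Matrix (Fin n) (Fin m) ℝ)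
    (X : Set (Fin n → ℝ)) (D : Set (Fin m → ℝ)) (α : ℝ) : Set (Fin n → ℝ) :=
  ⋃₀ {P | IsRPI A E X D α P}

/-- The minimal RPI set: the intersection of all nonempty RPI sets together with the MRPI set. -/
def Pmin {n m : ℕ} (A : Matrix (Fin n) (Fin n) ℝ) (E : Matrix (Fin n) (Fin m) ℝ)
    (X : Set (Fin n → ℝ)) (D : Set (Fin m → ℝ)) (α : ℝ) : Set (Fin n → ℝ) :=
  ⋂₀ ({P | IsRPI A E X D α P ∧ P.Nonempty} ∪ {Pmax A E X D α})

/-- The sequence `S_k^α`. -/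
def Sseq {n m : ℕ} (A : Matrix (Fin n) (Fin n) ℝ) (E : Matrix (Fin n) (Fin m) ℝ)
    (X : Set (Fin n → ℝ)) (D : Set (Fin m → ℝ)) (α : ℝ) : ℕ → Set (Fin n → ℝ)
  | 0 => X
  | k + 1 => A.mulVec ⁻¹' (pontryaginDiff (Sseq A E X D α k) (E.mulVec '' (α • D))) ∩ X

/-- The limit set `S_∞^α`. -/
def Sinf {n m : ℕ} (A : Matrix (Fin n) (Fin n) ℝ) (E : Matrix (Fin n) (Fin m) ℝ)
    (X : Set (Fin n → ℝ)) (D : Set (Fin m → ℝ)) (α : ℝ) : Set (Fin n → ℝ) :=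
  ⋂ k : ℕ, Sseq A E X D α k

/-- The sequence `R_k^α` of reachable sets. -/
def Rseq {n m : ℕ} (A : Matrix (Fin n) (Fin n) ℝ) (E : Matrix (Fin n) (Fin m) ℝ)
    (D : Set (Fin m → ℝ)) (α : ℝ) : ℕ → Set (Fin n → ℝ)
  | 0 => {0}
  | k + 1 => A.mulVec '' (Rseq A E D α k) + E.mulVec '' (α • D)

/-- The limit set `R_∞^α`. -/
def Rinf {n m : ℕ} (A : Matrix (Fin n) (Fin n) ℝ) (E : Matrix (Fin n) (Fin m) ℝ)
    (D : Set (Fin m → ℝ)) (α : ℝ) : Set (Fin n → ℝ) :=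
  ⋃ k : ℕ, Rseq A E D α k

/-- The critical scaling factor `α*`. -/
noncomputable def alphaStar {n m : ℕ} (A : Matrix (Fin n) (Fin n) ℝ)
    (E : Matrix (Fin n) (Fin m) ℝ) (X : Set (Fin n → ℝ)) (D : Set (Fin m → ℝ)) : ℝ :=
  sSup {α : ℝ | 0 < α ∧ Rinf A E D α ⊆ X}

/-- The sequence `Q_k^α` used to characterize the maximal controlled invariant set. -/
def Qseq {n m : ℕ} (A : Matrix (Fin n) (Fin n) ℝ) (E : Matrix (Fin n) (Fin m) ℝ)
    (X : Set (Fin n → ℝ)) (D : Set (Fin m → ℝ)) (α : ℝ) : ℕ → Set (Fin n → ℝ)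
  | 0 => X
  | k + 1 => A.mulVec ⁻¹' (Qseq A E X D α k + -(E.mulVec '' (α • D))) ∩ X

/-- `C` is controlled invariant for input-constraint scaling `α`. -/
def IsCI {n m : ℕ} (A : Matrix (Fin n) (Fin n) ℝ) (E : Matrix (Fin n) (Fin m) ℝ)
    (X : Set (Fin n → ℝ)) (D : Set (Fin m → ℝ)) (α : ℝ) (C : Set (Fin n → ℝ)) : Prop :=
  C ⊆ X ∧ ∀ x ∈ C, ∃ d ∈ α • D, A.mulVec x + E.mulVec d ∈ C

/-- The maximal controlled invariant set: the union of all CI sets. -/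
def Cmax {n m : ℕ} (A : Matrix (Fin n) (Fin n) ℝ) (E : Matrix (Fin n) (Fin m) ℝ)
    (X : Set (Fin n → ℝ)) (D : Set (Fin m → ℝ)) (α : ℝ) : Set (Fin n → ℝ) :=
  ⋃₀ {C | IsCI A E X D α C}

/-- The Minkowski sum `W = ⨁_{k=0}^{M-1} A₁₁^k E₁ 𝒟*`. -/
def Wset {n m r : ℕ} (hrn : r ≤ n) (A : Matrix (Fin n) (Fin n) ℝ)
    (E : Matrix (Fin n) (Fin m) ℝ) (D : Set (Fin m → ℝ)) (M : ℕ) : Set (Fin r → ℝ) :=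
  {w | ∃ d : Fin M → Fin m → ℝ, (∀ i, d i ∈ D) ∧
    w = ∑ i : Fin M, ((blockA11 hrn A) ^ (i : ℕ) * blockE1 hrn E).mulVec (d i)}

section ReachableSet

variable {R V W : Type*} [Semiring R] [AddCommMonoid V] [Module R V] [AddCommMonoid W]
  [Module R W]

def reachableSet (f : Module.End R V) (G : Set V) (k : ℕ) : Set V :=
  ∑ i ∈ Finset.range k, ⇑(f ^ i) '' G

variable {f : Module.End R V} {G : Set V}

theorem reachableSet_zero : reachableSet f G 0 = 0 := rfl

theorem reachableSet_add (a b : ℕ) :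
    reachableSet f G (a + b) = reachableSet f G a + ⇑(f ^ a) '' reachableSet f G b := by
  simp only [reachableSet, Finset.sum_range_add, Set.image_finsetSum, Set.image_image,
    pow_add, Module.End.mul_apply]

theorem reachableSet_succ (k : ℕ) :
    reachableSet f G (k + 1) = ⇑f '' reachableSet f G k + G := by
  rw [add_comm k, reachableSet_add, add_comm, pow_one]
  simp [reachableSet]

theorem reachableSet_mul (a b : ℕ) :
    reachableSet f G (a * b) = reachableSet (f ^ a) (reachableSet f G a) b := by
  induction b with
  | zero => rfl
  | succ b ih =>
    rw [Nat.mul_succ, reachableSet_add, ih]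
    simp only [reachableSet, Finset.sum_range_succ, pow_mul]

theorem zero_mem_reachableSet (h0 : 0 ∈ G) (k : ℕ) : 0 ∈ reachableSet f G k := by
  simpa [reachableSet] using
    Set.finsetSum_mem_finsetSum (Finset.range k) (fun i => ⇑(f ^ i) '' G) 0
      fun i _ => ⟨0, h0, map_zero _⟩

theorem reachableSet_mono (h0 : 0 ∈ G) {k l : ℕ} (hkl : k ≤ l) :
    reachableSet f G k ⊆ reachableSet f G l := by
  obtain ⟨j, rfl⟩ := Nat.exists_eq_add_of_le hkl
  rw [reachableSet_add]
  exact Set.subset_add_left _ ⟨0, zero_mem_reachableSet h0 j, map_zero _⟩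

theorem reachableSet_map {g : Module.End R W} {J : W →ₗ[R] V}
    (hJ : Function.Semiconj J g f) (G : Set W) (k : ℕ) :
    reachableSet f (J '' G) k = J '' reachableSet g G k := by
  simp only [reachableSet, Set.image_finsetSum, Set.image_image, Module.End.coe_pow,
    (hJ.iterate_right _).eq]

theorem image_reachableSet_mul_subset {g : Module.End R V} {c : R} (hg : Commute g f)
    {a : ℕ} (h : ⇑g '' reachableSet f G a ⊆ c • reachableSet f G a) (b : ℕ) :
    ⇑g '' reachableSet f G (a * b) ⊆ c • reachableSet f G (a * b) := by
  rw [reachableSet_mul, reachableSet, Set.image_finsetSum, Finset.smul_sum]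
  refine Set.finsetSum_subset_finsetSum _ _ _ fun t _ => ?_
  have hcomm : ∀ x, g (((f ^ a) ^ t) x) = ((f ^ a) ^ t) (g x) :=
    LinearMap.congr_fun (((hg.pow_right a).pow_right t).eq)
  calc ⇑g '' (⇑((f ^ a) ^ t) '' reachableSet f G a)
      = ⇑((f ^ a) ^ t) '' (⇑g '' reachableSet f G a) := by simp only [Set.image_image, hcomm]
    _ ⊆ ⇑((f ^ a) ^ t) '' (c • reachableSet f G a) := Set.image_mono h
    _ = c • ⇑((f ^ a) ^ t) '' reachableSet f G a := image_smul_set _ _ _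

theorem convex_reachableSet [PartialOrder R] (hG : Convex R G) (k : ℕ) :
    Convex R (reachableSet f G k) :=
  convex_sum _ fun _ _ => hG.linear_image _

theorem image_pow_subset_pow_smul {g : Module.End R V} {C : Set V} {c : R}
    (h : ⇑g '' C ⊆ c • C) (s : ℕ) : ⇑(g ^ s) '' C ⊆ c ^ s • C := by
  induction s with
  | zero => simp
  | succ s ih =>
    calc ⇑(g ^ (s + 1)) '' C = ⇑(g ^ s) '' (⇑g '' C) := by
          rw [pow_succ, Module.End.coe_mul, Set.image_comp]
      _ ⊆ ⇑(g ^ s) '' (c • C) := Set.image_mono h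
      _ = c • ⇑(g ^ s) '' C := image_smul_set _ _ _
      _ ⊆ c • c ^ s • C := Set.smul_set_mono ih
      _ = c ^ (s + 1) • C := by rw [smul_smul, pow_succ']

end ReachableSet

section Convex

variable {𝕜 V : Type*} [Field 𝕜] [LinearOrder 𝕜] [IsStrictOrderedRing 𝕜] [AddCommGroup V]
  [Module 𝕜 V]

theorem StarConvex.smul_set_subset_smul_set {C : Set V} (hC : StarConvex 𝕜 0 C) {a b : 𝕜}
    (ha : 0 ≤ a) (hab : a ≤ b) : a • C ⊆ b • C := by
  rintro _ ⟨x, hx, rfl⟩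
  rcases ha.eq_or_lt with rfl | ha
  · exact ⟨0, hC.mem ⟨x, hx⟩, by simp⟩
  · have hb := ha.trans_le hab
    refine ⟨(a / b) • x, hC.smul_mem hx (by positivity) (div_le_one_of_le₀ hab hb.le), ?_⟩
    simp only [smul_smul, mul_div_cancel₀ _ hb.ne']

theorem reachableSet_subset_geom_sum_smul {g : Module.End 𝕜 V} {C : Set V} (hC : Convex 𝕜 C)
    (hne : C.Nonempty) {η : 𝕜} (hη : 0 ≤ η) (h : ⇑g '' C ⊆ η • C) (j : ℕ) :
    reachableSet g C j ⊆ (∑ s ∈ Finset.range j, η ^ s) • C := by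
  induction j with
  | zero => simp [reachableSet_zero, Set.zero_smul_set hne]
  | succ j ih =>
    rw [reachableSet, Finset.sum_range_succ, Finset.sum_range_succ,
      hC.add_smul (Finset.sum_nonneg fun s _ => pow_nonneg hη s) (pow_nonneg hη j)]
    exact Set.add_subset_add ih (image_pow_subset_pow_smul h j)

theorem iUnion_reachableSet_subset_smul {f : Module.End 𝕜 V} {G : Set V} (hG : Convex 𝕜 G)
    (h0 : 0 ∈ G) {η : 𝕜} (hη0 : 0 ≤ η) (hη1 : η < 1) {K : ℕ} (hK : 0 < K)
    (h : ⇑(f ^ K) '' reachableSet f G K ⊆ η • reachableSet f G K) :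
    ⋃ k, reachableSet f G k ⊆ (1 - η)⁻¹ • reachableSet f G K := by
  have hconv := convex_reachableSet (f := f) hG K
  have hK0 := zero_mem_reachableSet (f := f) h0 K
  refine Set.iUnion_subset fun k => ?_
  have hgeom : ∑ s ∈ Finset.range k, η ^ s ≤ (1 - η)⁻¹ := by
    simpa [← Finset.range_eq_Ico] using
      geom_sum_Ico_le_of_lt_one (m := 0) (n := k) hη0 hη1
  calc reachableSet f G k ⊆ reachableSet f G (K * k) :=
        reachableSet_mono h0 (Nat.le_mul_of_pos_left k hK)
    _ = reachableSet (f ^ K) (reachableSet f G K) k := reachableSet_mul K k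
    _ ⊆ (∑ s ∈ Finset.range k, η ^ s) • reachableSet f G K :=
        reachableSet_subset_geom_sum_smul hconv ⟨0, hK0⟩ hη0 h k
    _ ⊆ (1 - η)⁻¹ • reachableSet f G K :=
        StarConvex.smul_set_subset_smul_set (hconv.starConvex hK0)
          (Finset.sum_nonneg fun s _ => pow_nonneg hη0 s) hgeom

end Convex

section BlockTriangular

variable {n r : ℕ} (hrn : r ≤ n)

def embedFirst : Matrix (Fin n) (Fin r) ℝ :=
  (1 : Matrix (Fin n) (Fin n) ℝ).submatrix id (Fin.castLE hrn)

theorem embedFirst_mul_submatrix {ι : Type*} (B : Matrix (Fin n) ι ℝ)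
    (hB : ∀ i : Fin n, r ≤ (i : ℕ) → ∀ j, B i j = 0) :
    embedFirst hrn * B.submatrix (Fin.castLE hrn) id = B := by
  ext i j
  by_cases hi : (i : ℕ) < r
  · obtain ⟨i, rfl⟩ : ∃ i' : Fin r, Fin.castLE hrn i' = i := ⟨⟨i, hi⟩, rfl⟩
    simp [embedFirst, Matrix.mul_apply, Matrix.one_apply, Fin.castLE_inj]
  · simp only [embedFirst, Matrix.mul_apply, Matrix.submatrix_apply, id, Matrix.one_apply,
      hB i (not_lt.1 hi), ite_mul, one_mul, zero_mul]
    exact Finset.sum_eq_zero fun k _ => if_neg fun h : i = Fin.castLE hrn k => hi (h ▸ k.2)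

theorem mul_embedFirst (A : Matrix (Fin n) (Fin n) ℝ)
    (hA : ∀ i j : Fin n, r ≤ (i : ℕ) → (j : ℕ) < r → A i j = 0) :
    A * embedFirst hrn = embedFirst hrn * blockA11 hrn A := by
  have hAJ : ∀ i j, (A * embedFirst hrn) i j = A i (Fin.castLE hrn j) := by
    simp [embedFirst, Matrix.mul_apply, Matrix.one_apply]
  rw [← embedFirst_mul_submatrix hrn (A * embedFirst hrn)
    fun i hi j => by rw [hAJ]; exact hA _ _ hi j.2]
  congr 1
  ext i j
  simp [hAJ, blockA11]

end BlockTriangular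

section Rseq

variable {n m : ℕ}

theorem Rseq_one_eq_reachableSet (A : Matrix (Fin n) (Fin n) ℝ) (E : Matrix (Fin n) (Fin m) ℝ)
    (D : Set (Fin m → ℝ)) (k : ℕ) :
    Rseq A E D 1 k = reachableSet (toLin' A) (E.mulVec '' D) k := by
  induction k with
  | zero => rfl
  | succ k ih =>
    rw [reachableSet_succ, ← ih, Rseq, one_smul]
    rfl

theorem image_toLin'_pow_image_mulVec {p : ℕ} (B : Matrix (Fin p) (Fin p) ℝ)
    (F : Matrix (Fin p) (Fin m) ℝ) (D : Set (Fin m → ℝ)) (i : ℕ) :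
    ⇑(toLin' B ^ i) '' (F.mulVec '' D) = (B ^ i * F).mulVec '' D := by
  simp [Set.image_image, ← toLin'_pow, mulVec_mulVec]

theorem Wset_eq_reachableSet {r : ℕ} (hrn : r ≤ n) (A : Matrix (Fin n) (Fin n) ℝ)
    (E : Matrix (Fin n) (Fin m) ℝ) (D : Set (Fin m → ℝ)) (M : ℕ) :
    Wset hrn A E D M =
      reachableSet (toLin' (blockA11 hrn A)) ((blockE1 hrn E).mulVec '' D) M := by
  ext w
  simp only [reachableSet, image_toLin'_pow_image_mulVec, Finset.sum_range, Set.mem_fintype_sum,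
    Wset]
  constructor
  · rintro ⟨d, hd, rfl⟩
    exact ⟨_, fun i => ⟨d i, hd i, rfl⟩, rfl⟩
  · rintro ⟨g, hg, rfl⟩
    choose d hd hdg using hg
    exact ⟨d, hd, by simp only [hdg]⟩

theorem Rseq_one_eq_image_reachableSet {r : ℕ} (hrn : r ≤ n) {A : Matrix (Fin n) (Fin n) ℝ}
    {E : Matrix (Fin n) (Fin m) ℝ}
    (hA : ∀ i j : Fin n, r ≤ (i : ℕ) → (j : ℕ) < r → A i j = 0)
    (hE : ∀ i : Fin n, r ≤ (i : ℕ) → ∀ j, E i j = 0) (D : Set (Fin m → ℝ)) (k : ℕ) :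
    Rseq A E D 1 k = toLin' (embedFirst hrn) ''
      reachableSet (toLin' (blockA11 hrn A)) ((blockE1 hrn E).mulVec '' D) k := by
  have hsemi : Function.Semiconj (toLin' (embedFirst hrn)) (toLin' (blockA11 hrn A))
      (toLin' A) := fun x => by
    simp only [toLin'_apply, mulVec_mulVec, mul_embedFirst hrn A hA]
  have hG : E.mulVec '' D = toLin' (embedFirst hrn) '' ((blockE1 hrn E).mulVec '' D) := by
    rw [Set.image_image]
    simp only [toLin'_apply, mulVec_mulVec, blockE1, embedFirst_mul_submatrix hrn E hE]
  rw [Rseq_one_eq_reachableSet, hG, reachableSet_map hsemi]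

end Rseq

theorem rinf_outer_approx_general {n m r : ℕ} (hrn : r ≤ n)
    (A : Matrix (Fin n) (Fin n) ℝ) (E : Matrix (Fin n) (Fin m) ℝ)
    (X : Set (Fin n → ℝ)) (D : Set (Fin m → ℝ))
    (hA1 : Assumption1 hrn A E X D)
    (η : ℝ) (hη0 : 0 < η) (hη1 : η < 1) (M : ℕ) (hM1 : 1 ≤ M)
    (N : ℕ) (hN1 : 1 ≤ N)
    (hN : (blockA11 hrn A ^ (M * N)).mulVec '' Wset hrn A E D M ⊆ η • Wset hrn A E D M) :
    Rinf A E D 1 ⊆ (1 - η)⁻¹ • Rseq A E D 1 (M * N) := by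
  have hRseq := Rseq_one_eq_image_reachableSet hrn hA1.lowerLeftA hA1.lowerE D
  set f := toLin' (blockA11 hrn A)
  set S := reachableSet f ((blockE1 hrn E).mulVec '' D)
  have h0 : (0 : Fin m → ℝ) ∈ D := interior_subset hA1.hD.2.2
  have hW : ⇑(f ^ (M * N)) '' S M ⊆ η • S M := by
    rw [Wset_eq_reachableSet] at hN
    rwa [← toLin'_pow]
  have hS : ⋃ k, S k ⊆ (1 - η)⁻¹ • S (M * N) :=
    iUnion_reachableSet_subset_smul (hA1.hD.1.linear_image (toLin' _)) ⟨0, h0, map_zero _⟩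
      hη0.le hη1 (Nat.mul_pos hM1 hN1)
      (image_reachableSet_mul_subset ((Commute.refl f).pow_left _) hW N)
  calc Rinf A E D 1 = toLin' (embedFirst hrn) '' ⋃ k, S k := by
        simp only [Rinf, hRseq, Set.image_iUnion]
    _ ⊆ toLin' (embedFirst hrn) '' ((1 - η)⁻¹ • S (M * N)) := Set.image_mono hS
    _ = (1 - η)⁻¹ • Rseq A E D 1 (M * N) := by rw [image_smul_set, hRseq]

theorem rinf_outer_approx {n m r : ℕ} (hrn : r ≤ n)
    (A : Matrix (Fin n) (Fin n) ℝ) (E : Matrix (Fin n) (Fin m) ℝ)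
    (X : Set (Fin n → ℝ)) (D : Set (Fin m → ℝ))
    (hA1 : Assumption1 hrn A E X D) (hA2 : Assumption2 hrn A)
    (η : ℝ) (hη0 : 0 < η) (hη1 : η < 1) (M : ℕ) (hM1 : 1 ≤ M) (hMr : M ≤ r)
    (hW : IsCSet (Wset hrn A E D M)) (N : ℕ) (hN1 : 1 ≤ N)
    (hN : (blockA11 hrn A ^ (M * N)).mulVec '' Wset hrn A E D M ⊆ η • Wset hrn A E D M) :
    Rinf A E D 1 ⊆ (1 - η)⁻¹ • Rseq A E D 1 (M * N) :=
  rinf_outer_approx_general hrn A E X D hA1 η hη0 hη1 M hM1 N hN1 hN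

end RPIScaling
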